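/- arXiv:2410.18737 — 3 statements merged into one kernel-verified Lean document; each statement's English description precedes it below -/
import Mathlib

section
/- For γ > 1, the integrals I(γ) = ∫_0^∞ (s+1)^{-(γ+2)/2}(s+2)^{(γ-1)/2} ds satisfy the recursion I(γ) = (2/(γ+1))·((γ+2)/2 · I(γ+2) - 2^{(γ+1)/2}). -/
/-!
Put `F(s) = (s+1)^a (s+2)^b` with `a = -(γ+2)/2`, `b = (γ+1)/2`. By the product rule
`F' = a (s+1)^(a-1) (s+2)^b + b (s+1)^a (s+2)^(b-1)`, whose two terms are the integrands of
`I(γ+2)` and `I(γ)`. Since `a + b = -1/2`, `F` decays like `(s+1)^(-1/2)` at infinity, so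
`∫_0^∞ F' = -F(0) = -2^b`, which is the recursion.
-/

open Real MeasureTheory Filter Topology Set

namespace RpowProduct

lemma rpow_mul_rpow_le {a b s : ℝ} (hb : 0 ≤ b) (hs : 0 ≤ s) :
    (s + 1) ^ a * (s + 2) ^ b ≤ 2 ^ b * (s + 1) ^ (a + b) := by
  have hs₁ : 0 < s + 1 := by linarith
  calc (s + 1) ^ a * (s + 2) ^ b ≤ (s + 1) ^ a * (2 * (s + 1)) ^ b := by
        gcongr; linarith
    _ = 2 ^ b * (s + 1) ^ (a + b) := by
        rw [mul_rpow zero_le_two hs₁.le, rpow_add hs₁]; ring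

lemma integrableOn_Ioi {a b : ℝ} (hab : a + b < -1) (hb : 0 ≤ b) :
    IntegrableOn (fun s : ℝ => (s + 1) ^ a * (s + 2) ^ b) (Ioi 0) := by
  have hcont : ContinuousOn (fun s : ℝ => (s + 1) ^ a * (s + 2) ^ b) (Ioi 0) := by
    refine ContinuousOn.mul ?_ ?_ <;>
      exact ContinuousOn.rpow_const (by fun_prop) fun s (hs : 0 < s) => Or.inl (by positivity)
  have hdom : IntegrableOn (fun s : ℝ => 2 ^ b * (s + 1) ^ (a + b)) (Ioi 0) :=
    (integrableOn_add_rpow_Ioi_of_lt hab (by norm_num)).const_mul _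
  refine hdom.mono' (hcont.aestronglyMeasurable measurableSet_Ioi) ?_
  filter_upwards [ae_restrict_mem measurableSet_Ioi] with s (hs : 0 < s)
  rw [norm_of_nonneg (by positivity)]
  exact rpow_mul_rpow_le hb hs.le

lemma tendsto_atTop_zero {a b : ℝ} (hab : a + b < 0) (hb : 0 ≤ b) :
    Tendsto (fun s : ℝ => (s + 1) ^ a * (s + 2) ^ b) atTop (𝓝 0) := by
  have hdom : Tendsto (fun s : ℝ => 2 ^ b * (s + 1) ^ (a + b)) atTop (𝓝 0) := by
    have := (tendsto_rpow_neg_atTop (neg_pos.mpr hab)).comp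
      (tendsto_atTop_add_const_right _ 1 tendsto_id)
    simpa [Function.comp_def] using this.const_mul ((2 : ℝ) ^ b)
  refine squeeze_zero' ?_ ?_ hdom
  · filter_upwards [eventually_ge_atTop 0] with s hs
    positivity
  · filter_upwards [eventually_ge_atTop 0] with s hs
    exact rpow_mul_rpow_le hb hs

lemma hasDerivAt (a b : ℝ) {s : ℝ} (hs : 0 < s + 1) :
    HasDerivAt (fun s : ℝ => (s + 1) ^ a * (s + 2) ^ b)
      (a * ((s + 1) ^ (a - 1) * (s + 2) ^ b) + b * ((s + 1) ^ a * (s + 2) ^ (b - 1))) s := by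
  have hs₂ : 0 < s + 2 := by linarith
  have hd₁ := ((hasDerivAt_id s).add_const 1).rpow_const (p := a) (Or.inl hs.ne')
  have hd₂ := ((hasDerivAt_id s).add_const 2).rpow_const (p := b) (Or.inl hs₂.ne')
  exact (hd₁.mul hd₂).congr_deriv (by simp only [id]; ring)

lemma integral_Ioi_recursion {a b : ℝ} (hab : a + b < 0) (hb : 1 ≤ b) :
    a * (∫ s in Ioi (0 : ℝ), (s + 1) ^ (a - 1) * (s + 2) ^ b)
      + b * ∫ s in Ioi (0 : ℝ), (s + 1) ^ a * (s + 2) ^ (b - 1) = -2 ^ b := by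
  have hint₁ := integrableOn_Ioi (a := a - 1) (b := b) (by linarith) (by linarith)
  have hint₂ := integrableOn_Ioi (a := a) (b := b - 1) (by linarith) (by linarith)
  have hFTC := integral_Ioi_of_hasDerivAt_of_tendsto'
    (fun s (hs : 0 ≤ s) => hasDerivAt a b (by linarith))
    ((hint₁.const_mul a).add (hint₂.const_mul b)) (tendsto_atTop_zero hab (by linarith))
  rw [integral_add (hint₁.const_mul a) (hint₂.const_mul b), integral_const_mul,
    integral_const_mul] at hFTC
  simpa using hFTC

end RpowProduct

/-- For `γ > 1`, the integrals `I(γ) = ∫_0^∞ (s+1)^{-(γ+2)/2}(s+2)^{(γ-1)/2} ds`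
satisfy the recursion `I(γ) = (2/(γ+1))·((γ+2)/2 · I(γ+2) - 2^{(γ+1)/2})`. -/
theorem I_recursion (γ : ℝ) (hγ : 1 < γ)
    (I : ℝ → ℝ)
    (hI : ∀ g : ℝ, I g =
      ∫ s in Set.Ioi (0 : ℝ), (s + 1) ^ (-(g + 2) / 2) * (s + 2) ^ ((g - 1) / 2)) :
    I γ = 2 / (γ + 1) * ((γ + 2) / 2 * I (γ + 2) - 2 ^ ((γ + 1) / 2)) := by
  have key := RpowProduct.integral_Ioi_recursion (a := -(γ + 2) / 2) (b := (γ + 1) / 2)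
    (by linarith) (by linarith)
  rw [show -(γ + 2) / 2 - 1 = -(γ + 2 + 2) / 2 by ring,
    show (γ + 1) / 2 - 1 = (γ - 1) / 2 by ring] at key
  nth_rw 1 [show (γ + 1) / 2 = (γ + 2 - 1) / 2 by ring] at key
  rw [← hI, ← hI] at key
  field_simp
  linarith
end

section
/- The function φ defined by φ(γ) = 2^{(1-γ)/2}·(γ/2)·I(γ) with I(γ) = ∫_0^∞ (s+1)^{-(γ+2)/2}(s+2)^{(γ-1)/2} ds satisfies the recursion φ(γ+2) = 1 + ((γ+1)/(2γ))·φ(γ) for all γ > 1. -/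
/-!
Integration by parts. For `w(s) = (s+1)^{-(γ+2)/2} (s+2)^{(γ+1)/2}` the derivative `w'` is
`-(γ+2)/2` times the integrand of `I(γ+2)` plus `(γ+1)/2` times the integrand of `I(γ)`.
Since `w` vanishes at infinity and `w(0) = 2^{(γ+1)/2}`, this gives
`(γ+2)/2 · I(γ+2) = 2^{(γ+1)/2} + (γ+1)/2 · I(γ)`, which is the recursion once multiplied
by `2^{-(γ+1)/2}`.
-/

open Real MeasureTheory Set Filter Topology

noncomputable def weight (a b s : ℝ) : ℝ := (s + 1) ^ a * (s + 2) ^ b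

lemma integrableOn_Ioi_add_one_rpow {c : ℝ} (hc : c < -1) :
    IntegrableOn (fun s : ℝ => (s + 1) ^ c) (Ioi 0) := by
  have h := integrableOn_Ioi_rpow_of_lt hc one_pos
  rw [← (measurePreserving_add_right volume (1 : ℝ)).integrableOn_comp_preimage
    (measurableEmbedding_addRight 1)] at h
  simpa [Function.comp_def] using h

lemma weight_le {a b s : ℝ} (hb : 0 ≤ b) (hs : 0 ≤ s) :
    weight a b s ≤ 2 ^ b * (s + 1) ^ (a + b) := by
  have hs1 : 0 < s + 1 := by linarith
  calc weight a b s ≤ (s + 1) ^ a * (2 * (s + 1)) ^ b := by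
        unfold weight; gcongr; linarith
    _ = 2 ^ b * (s + 1) ^ (a + b) := by
        rw [mul_rpow zero_le_two hs1.le, rpow_add hs1]; ring

lemma weight_nonneg (a b : ℝ) {s : ℝ} (hs : 0 ≤ s) : 0 ≤ weight a b s := by
  unfold weight; positivity

lemma continuousOn_weight (a b : ℝ) : ContinuousOn (weight a b) (Ici 0) := by
  unfold weight
  apply ContinuousOn.mul <;>
  · refine ContinuousOn.rpow_const (by fun_prop) fun s hs => Or.inl ?_
    have : (0:ℝ) ≤ s := hs
    positivity

lemma integrableOn_weight {a b : ℝ} (hab : a + b < -1) (hb : 0 ≤ b) :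
    IntegrableOn (weight a b) (Ioi 0) := by
  refine Integrable.mono' ((integrableOn_Ioi_add_one_rpow hab).const_mul (2 ^ b))
    (((continuousOn_weight a b).mono Ioi_subset_Ici_self).aestronglyMeasurable
      measurableSet_Ioi) ?_
  filter_upwards [ae_restrict_mem measurableSet_Ioi] with s hs
  rw [norm_of_nonneg (weight_nonneg a b (le_of_lt hs))]
  exact weight_le hb (le_of_lt hs)

lemma tendsto_weight_atTop {a b : ℝ} (hab : a + b < 0) (hb : 0 ≤ b) :
    Tendsto (weight a b) atTop (𝓝 0) := by
  have hlim : Tendsto (fun s : ℝ => 2 ^ b * (s + 1) ^ (a + b)) atTop (𝓝 0) := by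
    simpa using ((tendsto_rpow_neg_atTop (neg_pos.2 hab)).comp
      (tendsto_atTop_add_const_right atTop 1 tendsto_id)).const_mul ((2 : ℝ) ^ b)
  refine squeeze_zero' ?_ ?_ hlim
  · filter_upwards [eventually_ge_atTop 0] with s hs using weight_nonneg a b hs
  · filter_upwards [eventually_ge_atTop 0] with s hs using weight_le hb hs

lemma hasDerivAt_weight (a b : ℝ) {s : ℝ} (hs : -1 < s) :
    HasDerivAt (weight a b) (a * weight (a - 1) b s + b * weight a (b - 1) s) s := by
  have h1 : HasDerivAt (fun x : ℝ => (x + 1) ^ a) (1 * a * (s + 1) ^ (a - 1)) s :=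
    ((hasDerivAt_id s).add_const 1).rpow_const (Or.inl (ne_of_gt (by simp only [id]; linarith)))
  have h2 : HasDerivAt (fun x : ℝ => (x + 2) ^ b) (1 * b * (s + 2) ^ (b - 1)) s :=
    ((hasDerivAt_id s).add_const 2).rpow_const (Or.inl (ne_of_gt (by simp only [id]; linarith)))
  refine (h1.mul h2).congr_deriv ?_
  simp only [weight]
  ring

lemma integral_weight_recursion {a b : ℝ} (hab : a + b < 0) (hb : 1 ≤ b) :
    a * (∫ s in Ioi 0, weight (a - 1) b s) + b * ∫ s in Ioi 0, weight a (b - 1) s = -2 ^ b := by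
  have hint₁ := integrableOn_weight (a := a - 1) (b := b) (by linarith) (by linarith)
  have hint₂ := integrableOn_weight (a := a) (b := b - 1) (by linarith) (by linarith)
  have hFTC := integral_Ioi_of_hasDerivAt_of_tendsto
    ((continuousOn_weight a b).continuousWithinAt self_mem_Ici)
    (fun s hs => hasDerivAt_weight a b (by linarith [mem_Ioi.1 hs]))
    ((hint₁.const_mul a).add (hint₂.const_mul b)) (tendsto_weight_atTop hab (by linarith))
  rw [integral_add (hint₁.const_mul a) (hint₂.const_mul b), integral_const_mul,
    integral_const_mul] at hFTC
  have hw0 : weight a b 0 = 2 ^ b := by simp [weight]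
  linarith

/-- The function `φ(γ) = 2^{(1-γ)/2}·(γ/2)·I(γ)` with
`I(γ) = ∫_0^∞ (s+1)^{-(γ+2)/2}(s+2)^{(γ-1)/2} ds` satisfies the recursion
`φ(γ+2) = 1 + ((γ+1)/(2γ))·φ(γ)` for all `γ > 1`. -/
theorem phi_recursion (I φ : ℝ → ℝ)
    (hI : ∀ g : ℝ, I g =
      ∫ s in Set.Ioi (0 : ℝ), (s + 1) ^ (-(g + 2) / 2) * (s + 2) ^ ((g - 1) / 2))
    (hφ : ∀ g : ℝ, φ g = 2 ^ ((1 - g) / 2) * (g / 2) * I g) :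
    ∀ γ : ℝ, 1 < γ → φ (γ + 2) = 1 + (γ + 1) / (2 * γ) * φ γ := by
  intro γ hγ
  have hI_weight (g a b : ℝ) (ha : a = -(g + 2) / 2) (hb : b = (g - 1) / 2) :
      I g = ∫ s in Ioi 0, weight a b s := by
    rw [hI, ha, hb]; rfl
  have hrec := integral_weight_recursion (a := -(γ + 2) / 2) (b := (γ + 1) / 2)
    (by linarith) (by linarith)
  rw [← hI_weight (γ + 2) (-(γ + 2) / 2 - 1) ((γ + 1) / 2) (by ring) (by ring),
    ← hI_weight γ (-(γ + 2) / 2) ((γ + 1) / 2 - 1) rfl (by ring)] at hrec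
  set c : ℝ := 2 ^ ((1 - (γ + 2)) / 2)
  have hc : (2 : ℝ) ^ ((1 - γ) / 2) = 2 * c := by
    rw [show (1 - γ) / 2 = 1 + (1 - (γ + 2)) / 2 by ring, rpow_add two_pos, rpow_one]
  have hct : c * 2 ^ ((γ + 1) / 2) = 1 := by
    rw [← rpow_add two_pos, show (1 - (γ + 2)) / 2 + (γ + 1) / 2 = 0 by ring, rpow_zero]
  have hγ0 : γ ≠ 0 := (zero_lt_one.trans hγ).ne'
  rw [hφ, hφ, hc, show (γ + 1) / (2 * γ) * (2 * c * (γ / 2) * I γ) = c * ((γ + 1) / 2) * I γ by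
    field_simp]
  linear_combination (-c) * hrec + hct
end

section
/- For γ ∈ [1,3], φ(γ) ≥ γ·(7/15)·(10/7)^{(5-γ)/2}, where φ(γ) = 2^{(1-γ)/2}·(γ/2)·∫_0^∞ (s+1)^{-(γ+2)/2}(s+2)^{(γ-1)/2} ds. -/
open Real MeasureTheory Set

/-!
After the substitution `u = s + 1` the integrand of `φ(γ)` is `w(u) · x(u)^(-α)` with
`w = u^(-5/2) (u + 1)` (the integrand for `γ = 3`), `x = (u + 1)/u` and `α = (3 - γ)/2`, while
`w · x` is the integrand for `γ = 5`. As `t ↦ t^(-α)` is convex, Jensen's inequality for the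
weight `w` gives `I(γ) ≥ I(3) · (I(5)/I(3))^(-α) = 8/3 · (7/5)^(-α)`, which is the claimed bound;
this is the Hölder interpolation between `γ = 3` and `γ = 5`. Jensen is applied in its elementary
form: integrate the tangent line of `t^(-α)` at the mean `t = 7/5`.
-/

theorem setIntegral_Ioi_comp_add_right {E : Type*} [NormedAddCommGroup E] [NormedSpace ℝ E]
    (g : ℝ → E) (c d : ℝ) : ∫ x in Ioi c, g (x + d) = ∫ x in Ioi (c + d), g x := by
  simpa [preimage_add_const_Ioi] using
    (measurePreserving_add_right volume d).setIntegral_preimage_emb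
      (measurableEmbedding_addRight d) g (Ioi (c + d))

theorem one_sub_mul_sub_one_le_rpow_neg {t α : ℝ} (ht : 0 < t) (hα : 0 ≤ α) :
    1 - α * (t - 1) ≤ t ^ (-α) := by
  rw [rpow_def_of_pos ht]
  calc 1 - α * (t - 1) ≤ log t * -α + 1 := by nlinarith [log_le_sub_one_of_pos ht]
    _ ≤ exp (log t * -α) := add_one_le_exp _

theorem le_integral_mul_rpow_neg {X : Type*} [MeasurableSpace X] {μ : Measure X} {f x : X → ℝ}
    {α c : ℝ} (hα : 0 ≤ α) (hc : 0 < c) (hf : 0 ≤ᵐ[μ] f) (hx : ∀ᵐ a ∂μ, 0 < x a)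
    (hfi : Integrable f μ) (hfxi : Integrable (fun a ↦ f a * x a) μ)
    (hi : Integrable (fun a ↦ f a * x a ^ (-α)) μ) :
    c ^ (-α) * ((1 + α) * ∫ a, f a ∂μ - α / c * ∫ a, f a * x a ∂μ) ≤
      ∫ a, f a * x a ^ (-α) ∂μ := by
  have tangent : ∀ᵐ a ∂μ,
      c ^ (-α) * ((1 + α) * f a - α / c * (f a * x a)) ≤ f a * x a ^ (-α) := by
    filter_upwards [hf, hx] with a hfa hxa
    have hxc : 0 < x a / c := div_pos hxa hc
    have split : x a ^ (-α) = c ^ (-α) * (x a / c) ^ (-α) := by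
      rw [← mul_rpow hc.le hxc.le, mul_div_cancel₀ _ hc.ne']
    calc c ^ (-α) * ((1 + α) * f a - α / c * (f a * x a))
        = f a * c ^ (-α) * (1 - α * (x a / c - 1)) := by ring
      _ ≤ f a * c ^ (-α) * (x a / c) ^ (-α) := by
        gcongr
        · exact mul_nonneg hfa (rpow_nonneg hc.le _)
        · exact one_sub_mul_sub_one_le_rpow_neg hxc hα
      _ = f a * x a ^ (-α) := by rw [split]; ring
  calc c ^ (-α) * ((1 + α) * ∫ a, f a ∂μ - α / c * ∫ a, f a * x a ∂μ)
      = ∫ a, c ^ (-α) * ((1 + α) * f a - α / c * (f a * x a)) ∂μ := by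
        rw [integral_const_mul, integral_sub (hfi.const_mul _) (hfxi.const_mul _),
          integral_const_mul, integral_const_mul]
    _ ≤ ∫ a, f a * x a ^ (-α) ∂μ :=
        integral_mono_ae (((hfi.const_mul _).sub (hfxi.const_mul _)).const_mul _) hi tangent

theorem integrableOn_Ioi_one_rpow {a : ℝ} (ha : a < -1) :
    IntegrableOn (fun u : ℝ ↦ u ^ a) (Ioi 1) :=
  integrableOn_Ioi_rpow_of_lt ha one_pos

theorem integral_Ioi_one_rpow {a : ℝ} (ha : a < -1) : ∫ u in Ioi 1, u ^ a = -1 / (a + 1) := by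
  simpa using integral_Ioi_rpow_of_lt ha one_pos

/-- The integrand of `φ(γ)` in the variable `u = s + 1`. -/
noncomputable def phiIntegrand (γ u : ℝ) : ℝ := u ^ (-(γ + 2) / 2) * (u + 1) ^ ((γ - 1) / 2)

theorem phiIntegrand_mul_rpow {u : ℝ} (hu : 0 < u) (γ β : ℝ) :
    phiIntegrand γ u * ((u + 1) / u) ^ β = phiIntegrand (γ + 2 * β) u := by
  have hu1 : 0 < u + 1 := by linarith
  rw [phiIntegrand, phiIntegrand, show -(γ + 2 * β + 2) / 2 = -(γ + 2) / 2 - β by ring,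
    show (γ + 2 * β - 1) / 2 = (γ - 1) / 2 + β by ring, rpow_sub hu, rpow_add hu1,
    div_rpow hu1.le hu.le]
  ring

theorem phiIntegrand_three {u : ℝ} (hu : 0 < u) :
    phiIntegrand 3 u = u ^ (-(3 / 2) : ℝ) + u ^ (-(5 / 2) : ℝ) := by
  have h : u ^ (-(3 / 2) : ℝ) = u ^ (-(5 / 2) : ℝ) * u := by
    rw [← rpow_add_one hu.ne']; norm_num
  rw [phiIntegrand, h]
  norm_num
  ring

theorem phiIntegrand_five {u : ℝ} (hu : 0 < u) :
    phiIntegrand 5 u = u ^ (-(3 / 2) : ℝ) + 2 * u ^ (-(5 / 2) : ℝ) + u ^ (-(7 / 2) : ℝ) := by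
  have h3 : u ^ (-(3 / 2) : ℝ) = u ^ (-(7 / 2) : ℝ) * u ^ (2 : ℕ) := by
    rw [← rpow_natCast, ← rpow_add hu]; norm_num
  have h5 : u ^ (-(5 / 2) : ℝ) = u ^ (-(7 / 2) : ℝ) * u := by
    rw [← rpow_add_one hu.ne']; norm_num
  rw [phiIntegrand, h3, h5]
  norm_num
  ring

theorem integrableOn_phiIntegrand {γ : ℝ} (hγ : 1 ≤ γ) :
    IntegrableOn (phiIntegrand γ) (Ioi 1) := by
  set β := (γ - 1) / 2
  have hβ : 0 ≤ β := by simp only [β]; linarith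
  refine ((integrableOn_Ioi_one_rpow (by norm_num : (-(3 / 2) : ℝ) < -1)).const_mul
    (2 ^ β)).mono' (by unfold phiIntegrand; fun_prop) ?_
  filter_upwards [ae_restrict_mem measurableSet_Ioi] with u hu
  have hu0 : 0 < u := one_pos.trans hu
  have hx : (u + 1) / u ≤ 2 := by rw [div_le_iff₀ hu0]; linarith [mem_Ioi.mp hu]
  have h := phiIntegrand_mul_rpow hu0 1 β
  rw [show 1 + 2 * β = γ by simp only [β]; ring] at h
  have h1 : phiIntegrand 1 u = u ^ (-(3 / 2) : ℝ) := by norm_num [phiIntegrand]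
  rw [← h, h1, Real.norm_of_nonneg (by positivity), mul_comm (2 ^ β)]
  gcongr

theorem integral_phiIntegrand_three : ∫ u in Ioi 1, phiIntegrand 3 u = 8 / 3 := by
  rw [setIntegral_congr_fun measurableSet_Ioi fun u hu ↦ phiIntegrand_three (one_pos.trans hu),
    integral_add (integrableOn_Ioi_one_rpow (by norm_num))
      (integrableOn_Ioi_one_rpow (by norm_num)),
    integral_Ioi_one_rpow (by norm_num), integral_Ioi_one_rpow (by norm_num)]
  norm_num

theorem integral_phiIntegrand_five : ∫ u in Ioi 1, phiIntegrand 5 u = 56 / 15 := by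
  have h3 := integrableOn_Ioi_one_rpow (by norm_num : (-(3 / 2) : ℝ) < -1)
  have h5 := (integrableOn_Ioi_one_rpow (by norm_num : (-(5 / 2) : ℝ) < -1)).const_mul 2
  have h7 := integrableOn_Ioi_one_rpow (by norm_num : (-(7 / 2) : ℝ) < -1)
  have h35 : IntegrableOn (fun u : ℝ ↦ u ^ (-(3 / 2) : ℝ) + 2 * u ^ (-(5 / 2) : ℝ)) (Ioi 1) :=
    h3.add h5
  rw [setIntegral_congr_fun measurableSet_Ioi fun u hu ↦ phiIntegrand_five (one_pos.trans hu),
    integral_add h35 h7, integral_add h3 h5, integral_const_mul,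
    integral_Ioi_one_rpow (by norm_num), integral_Ioi_one_rpow (by norm_num),
    integral_Ioi_one_rpow (by norm_num)]
  norm_num

theorem le_integral_phiIntegrand {γ : ℝ} (h1 : 1 ≤ γ) (h3 : γ ≤ 3) :
    8 / 3 * (7 / 5) ^ (-((3 - γ) / 2)) ≤ ∫ u in Ioi 1, phiIntegrand γ u := by
  set α := (3 - γ) / 2
  have hpos : ∀ᵐ u ∂(volume.restrict (Ioi (1 : ℝ))), 0 < u := by
    filter_upwards [ae_restrict_mem measurableSet_Ioi] with u hu
    exact one_pos.trans hu
  have interpolate : ∀ β γ', γ' = 3 + 2 * β →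
      (fun u ↦ phiIntegrand 3 u * ((u + 1) / u) ^ β) =ᵐ[volume.restrict (Ioi 1)]
        phiIntegrand γ' := by
    rintro β _ rfl
    filter_upwards [hpos] with u hu
    exact phiIntegrand_mul_rpow hu 3 β
  have h5 : (fun u ↦ phiIntegrand 3 u * ((u + 1) / u)) =ᵐ[volume.restrict (Ioi 1)]
      phiIntegrand 5 := by
    simpa only [rpow_one] using interpolate 1 5 (by norm_num)
  have hγ := interpolate (-α) γ (by simp only [α]; ring)
  -- `7/5 = I(5)/I(3)` is the mean of `x` for the weight `phiIntegrand 3`.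
  have key := le_integral_mul_rpow_neg (c := 7 / 5) (x := fun u ↦ (u + 1) / u)
    (by simp only [α]; linarith) (by norm_num)
    (by filter_upwards [hpos] with u hu; unfold phiIntegrand; positivity)
    (by filter_upwards [hpos] with u hu; positivity)
    (integrableOn_phiIntegrand (by norm_num))
    ((integrableOn_phiIntegrand (by norm_num)).congr h5.symm)
    ((integrableOn_phiIntegrand h1).congr hγ.symm)
  rw [integral_congr_ae h5, integral_congr_ae hγ, integral_phiIntegrand_three,
    integral_phiIntegrand_five] at key
  convert key using 1
  ring

/-- For `γ ∈ [1,3]`, `φ(γ) ≥ γ·(7/15)·(10/7)^{(5-γ)/2}`, where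
`φ(γ) = 2^{(1-γ)/2}·(γ/2)·∫_0^∞ (s+1)^{-(γ+2)/2}(s+2)^{(γ-1)/2} ds`. -/
theorem phi_lower_bound_one_three (γ : ℝ) (hγ : γ ∈ Set.Icc (1 : ℝ) 3) :
    (2 : ℝ) ^ ((1 - γ) / 2) * (γ / 2) *
      (∫ s in Set.Ioi (0 : ℝ), (s + 1) ^ (-(γ + 2) / 2) * (s + 2) ^ ((γ - 1) / 2))
      ≥ γ * (7 / 15) * (10 / 7) ^ ((5 - γ) / 2) := by
  obtain ⟨h1, h3⟩ := hγ
  have shift : ∫ s in Ioi (0 : ℝ), (s + 1) ^ (-(γ + 2) / 2) * (s + 2) ^ ((γ - 1) / 2)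
      = ∫ u in Ioi 1, phiIntegrand γ u := by
    have h := setIntegral_Ioi_comp_add_right (phiIntegrand γ) 0 1
    rw [zero_add] at h
    rw [← h]
    simp only [phiIntegrand, add_assoc, one_add_one_eq_two]
  have constants : γ * (7 / 15) * (10 / 7) ^ ((5 - γ) / 2)
      = 2 ^ ((1 - γ) / 2) * (γ / 2) * (8 / 3 * (7 / 5) ^ (-((3 - γ) / 2))) := by
    rw [show (5 - γ) / 2 = (3 - γ) / 2 + 1 by ring, show (1 - γ) / 2 = (3 - γ) / 2 - 1 by ring,
      rpow_add_one (by norm_num), rpow_sub_one (by norm_num), rpow_neg (by norm_num),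
      ← inv_rpow (by norm_num), show (10 / 7 : ℝ) = 2 * (7 / 5)⁻¹ by norm_num,
      mul_rpow (by norm_num) (by norm_num)]
    ring
  rw [ge_iff_le, shift, constants]
  gcongr
  exact le_integral_phiIntegrand h1 h3
end
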